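/- arXiv:2106.01648 — 2 statements merged into one kernel-verified Lean document; each statement's English description precedes it below -/
import Mathlib

section
/- Let V be a finite type and c : V → V → ℝ symmetric (c i j = c j i) and nonnegative (c i j ≥ 0). Let σ be a tour on a finite set S ⊆ V with at least three elements, i.e., a permutation of V with support S whose restriction to S is a single cycle, and let T ⊆ S. Then 2 · Σ_{i ∈ S} c(i, σ i) ≥ Σ_{i ∈ T} (two-smallest sum of the function j ↦ c i j over S \ {i}). -/
/-- The two-smallest sum of `f` over `S`: the minimum of `f j + f k`
over all pairs of distinct elements `j, k ∈ S`. -/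
noncomputable def twoMinSum {V : Type*} (f : V → ℝ) (S : Finset V) : ℝ :=
  sInf {x : ℝ | ∃ j ∈ S, ∃ k ∈ S, j ≠ k ∧ x = f j + f k}

/-- A tour on a finite set `S`: a permutation whose support equals `S`
and whose restriction to `S` is a single cycle. -/
def IsTour {V : Type*} [Fintype V] [DecidableEq V] (σ : Equiv.Perm V)
    (S : Finset V) : Prop :=
  σ.IsCycle ∧ σ.support = S

/-!
Every node `i` of the tour is joined to its two neighbours `σ i` and `σ⁻¹ i`, which are distinct
nodes of `S \ {i}` because the cycle has length at least three; hence the two-smallest sum at `i`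
is at most `c i (σ i) + c i (σ⁻¹ i)`. Summing over `T ⊆ S` and using `c ≥ 0`, the right-hand side
is at most the sum over all of `S`, which by symmetry of `c` counts every edge of the tour twice.
-/

theorem twoMinSum_le {V : Type*} {f : V → ℝ} {S : Finset V} {j k : V}
    (hj : j ∈ S) (hk : k ∈ S) (hjk : j ≠ k) : twoMinSum f S ≤ f j + f k := by
  refine csInf_le ?_ ⟨j, hj, k, hk, hjk, rfl⟩
  refine ((S ×ˢ S).finite_toSet.image fun p => f p.1 + f p.2).bddBelow.mono ?_
  rintro _ ⟨j, hj, k, hk, -, rfl⟩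
  exact ⟨(j, k), Finset.mk_mem_product hj hk, rfl⟩

namespace Equiv.Perm

variable {α : Type*} [Fintype α] [DecidableEq α] {σ : Perm α} {x : α}

theorem IsCycle.apply_ne_inv_apply (hσ : σ.IsCycle) (h3 : 3 ≤ σ.support.card)
    (hx : σ x ≠ x) : σ x ≠ σ⁻¹ x := by
  intro h
  have hsq : σ ^ 2 = 1 := by
    rw [hσ.pow_eq_one_iff' hx, sq, mul_apply, h]
    simp
  have := Nat.le_of_dvd two_pos (orderOf_dvd_of_pow_eq_one hsq)
  rw [hσ.orderOf] at this
  omega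

theorem sum_apply_inv_apply_eq {M : Type*} [AddCommMonoid M] {S : Finset α}
    (hS : σ.support ⊆ S) (c : α → α → M) (hc : ∀ i j, c i j = c j i) :
    ∑ i ∈ S, c i (σ⁻¹ i) = ∑ i ∈ S, c i (σ i) := by
  have hσS : {a | σ a ≠ a} ⊆ (S : Set α) := fun a ha => hS (mem_support.mpr ha)
  rw [σ.sum_comp' S (fun a b => c b a) hσS]
  exact Finset.sum_congr rfl fun i _ => hc _ _

end Equiv.Perm

theorem IsTour.twoMinSum_le {V : Type*} [Fintype V] [DecidableEq V] {σ : Equiv.Perm V}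
    {S : Finset V} (hσ : IsTour σ S) (hS : 3 ≤ S.card) (c : V → V → ℝ) {i : V} (hi : i ∈ S) :
    twoMinSum (fun j => c i j) (S.erase i) ≤ c i (σ i) + c i (σ⁻¹ i) := by
  obtain ⟨hcyc, rfl⟩ := hσ
  have hσi : σ i ≠ i := Equiv.Perm.mem_support.mp hi
  have hσinv : σ⁻¹ i ≠ i := by rwa [Ne, Equiv.Perm.inv_eq_iff_eq, eq_comm]
  refine _root_.twoMinSum_le ?_ ?_ (hcyc.apply_ne_inv_apply hS hσi)
  · exact Finset.mem_erase.mpr ⟨hσi, Equiv.Perm.apply_mem_support.mpr hi⟩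
  · exact Finset.mem_erase.mpr ⟨hσinv, by rwa [← Equiv.Perm.support_inv, Equiv.Perm.apply_mem_support, Equiv.Perm.support_inv]⟩

theorem stmt8 {V : Type*} [Fintype V] [DecidableEq V] (c : V → V → ℝ)
    (hsym : ∀ i j, c i j = c j i) (hc : ∀ i j, 0 ≤ c i j)
    (σ : Equiv.Perm V) (S : Finset V) (hσ : IsTour σ S) (hS : 3 ≤ S.card)
    (T : Finset V) (hT : T ⊆ S) :
    ∑ i ∈ T, twoMinSum (fun j => c i j) (S.erase i) ≤ 2 * ∑ i ∈ S, c i (σ i) :=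
  calc ∑ i ∈ T, twoMinSum (fun j => c i j) (S.erase i)
      ≤ ∑ i ∈ T, (c i (σ i) + c i (σ⁻¹ i)) :=
        Finset.sum_le_sum fun i hi => hσ.twoMinSum_le hS c (hT hi)
    _ ≤ ∑ i ∈ S, (c i (σ i) + c i (σ⁻¹ i)) :=
        Finset.sum_le_sum_of_subset_of_nonneg hT fun i _ _ => add_nonneg (hc _ _) (hc _ _)
    _ = 2 * ∑ i ∈ S, c i (σ i) := by
        rw [Finset.sum_add_distrib, Equiv.Perm.sum_apply_inv_apply_eq hσ.2.le c hsym]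
        ring
end

section
/- Let V be a finite type and c : V → V → ℝ satisfy the triangle inequality (c i k ≤ c i j + c j k for all i, j, k). Let σ be a tour on a finite set S ⊆ V with at least four elements, i.e., a permutation of V with support S whose restriction to S is a single cycle, and let i ∈ S. Then there exists a tour σ' on S \ {i} with cost Σ_{j ∈ S \ {i}} c(j, σ' j) ≤ Σ_{j ∈ S} c(j, σ j). -/
open Equiv Finset

theorem Equiv.Perm.IsCycle.apply_apply_ne_self {α : Type*} [Fintype α] [DecidableEq α]
    {f : Perm α} (hf : f.IsCycle) (hcard : 3 ≤ #f.support) {x : α} (hx : f x ≠ x) :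
    f (f x) ≠ x := by
  intro hffx
  rw [hf.eq_swap_of_apply_apply_eq_self hx hffx, Perm.card_support_swap hx.symm] at hcard
  omega

theorem IsTour.swap_mul {V : Type*} [Fintype V] [DecidableEq V] {σ : Perm V} {S : Finset V}
    (hσ : IsTour σ S) (hcard : 3 ≤ #S) {i : V} (hi : i ∈ S) :
    IsTour (swap i (σ i) * σ) (S.erase i) := by
  obtain ⟨hcyc, rfl⟩ := hσ
  have hσi : σ i ≠ i := Perm.mem_support.mp hi
  have hσσi : σ (σ i) ≠ i := hcyc.apply_apply_ne_self hcard hσi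
  exact ⟨hcyc.swap_mul hσi hσσi,
    by rw [Perm.support_swap_mul_eq σ i hσσi, sdiff_singleton_eq_erase]⟩

theorem sum_swap_mul_apply_erase_le {V : Type*} [Fintype V] [DecidableEq V] (c : V → V → ℝ)
    (htri : ∀ i j k, c i k ≤ c i j + c j k) (σ : Perm V) {i : V} (hi : i ∈ σ.support) :
    ∑ j ∈ σ.support.erase i, c j ((swap i (σ i) * σ) j) ≤ ∑ j ∈ σ.support, c j (σ j) := by
  set p := σ⁻¹ i
  have hσp : σ p = i := σ.apply_symm_apply i
  have hσi : σ i ≠ i := Perm.mem_support.mp hi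
  have hpi : p ≠ i := fun h => hσi (by rwa [h] at hσp)
  have hp : p ∈ σ.support.erase i :=
    mem_erase.mpr ⟨hpi, Perm.mem_support.mpr (by rw [hσp]; exact hpi.symm)⟩
  have hshortcut : (swap i (σ i) * σ) p = σ i := by
    rw [Perm.mul_apply, hσp, swap_apply_left]
  have hagree : ∀ j ∈ (σ.support.erase i).erase p, (swap i (σ i) * σ) j = σ j := by
    intro j hj
    rw [mem_erase, mem_erase] at hj
    obtain ⟨hjp, hji, -⟩ := hj
    rw [Perm.mul_apply, swap_apply_of_ne_of_ne (fun h => hjp (Perm.eq_inv_iff_eq.mpr h))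
      (fun h => hji (σ.injective h))]
  calc ∑ j ∈ σ.support.erase i, c j ((swap i (σ i) * σ) j)
      = c p (σ i) + ∑ j ∈ (σ.support.erase i).erase p, c j (σ j) := by
        rw [← add_sum_erase _ _ hp, hshortcut, sum_congr rfl fun j hj => by rw [hagree j hj]]
    _ ≤ c i (σ i) + (c p (σ p) + ∑ j ∈ (σ.support.erase i).erase p, c j (σ j)) := by
        rw [hσp]; linarith [htri p i (σ i)]
    _ = ∑ j ∈ σ.support, c j (σ j) := by
        rw [add_sum_erase _ (fun j => c j (σ j)) hp, add_sum_erase _ (fun j => c j (σ j)) hi]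

theorem stmt9 {V : Type*} [Fintype V] [DecidableEq V] (c : V → V → ℝ)
    (htri : ∀ i j k, c i k ≤ c i j + c j k)
    (σ : Equiv.Perm V) (S : Finset V) (hσ : IsTour σ S) (hS : 4 ≤ S.card)
    (i : V) (hi : i ∈ S) :
    ∃ σ' : Equiv.Perm V, IsTour σ' (S.erase i) ∧
      ∑ j ∈ S.erase i, c j (σ' j) ≤ ∑ j ∈ S, c j (σ j) := by
  refine ⟨swap i (σ i) * σ, hσ.swap_mul (by omega) hi, ?_⟩
  obtain ⟨-, rfl⟩ := hσ
  exact sum_swap_mul_apply_erase_le c htri σ hi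
end
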